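/- Let C > 0. There exists a constant C' > 0 depending only on C such that every convex element K(a,b,ã,b̃) satisfying conditions (D1) and (D2) with constant C has a ≤ C'·b. -/

import Mathlib

noncomputable section

/-- The Euclidean plane. -/
abbrev E2 := EuclideanSpace ℝ (Fin 2)

/-- The point (x, y) of the Euclidean plane. -/
def pt2 (x y : ℝ) : E2 := WithLp.toLp 2 ![x, y]

/-- The sine of the interior angle α at `V4 = (0,b)` of the triangle with vertices
`V2 = (a,0)`, `V3 = (ta,tb)`, `V4 = (0,b)`. -/
def sinAlpha (a b ta tb : ℝ) : ℝ :=
  Real.sin (EuclideanGeometry.angle (pt2 a 0) (pt2 0 b) (pt2 ta tb))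

/-!
Twice the area of the triangle `V2 V3 V4` is `sin α · |V4V2| · |V4V3| ≥ sin α · a · ã`, and it is
also the cross product `a (b̃ - b) + b ã`, which convexity makes positive and `b̃ ≤ b` bounds by
`b ã`. Hence `sin α · a ≤ b`, so `C' = C` works.
-/

open InnerProductGeometry

theorem EuclideanSpace.sin_angle_mul_norm_mul_norm_eq_abs_cross (x y : EuclideanSpace ℝ (Fin 2)) :
    Real.sin (angle x y) * (‖x‖ * ‖y‖) = |x 0 * y 1 - x 1 * y 0| := by
  rw [sin_angle_mul_norm_mul_norm, ← Real.sqrt_sq_eq_abs]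
  congr 1
  simp only [PiLp.inner_apply, Fin.sum_univ_two, RCLike.inner_apply, conj_trivial]
  ring

@[simp] theorem pt2_apply_zero (x y : ℝ) : pt2 x y 0 = x := rfl

@[simp] theorem pt2_apply_one (x y : ℝ) : pt2 x y 1 = y := rfl

theorem pt2_sub_pt2 (x y x' y' : ℝ) : pt2 x y - pt2 x' y' = pt2 (x - x') (y - y') := by
  ext i; fin_cases i <;> simp

theorem abs_le_norm_pt2 (x y : ℝ) : |x| ≤ ‖pt2 x y‖ := by
  simpa using PiLp.norm_apply_le (pt2 x y) 0

theorem sinAlpha_eq_sin_angle (a b ta tb : ℝ) :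
    sinAlpha a b ta tb = Real.sin (angle (pt2 a (-b)) (pt2 ta (tb - b))) := by
  simp only [sinAlpha, EuclideanGeometry.angle, vsub_eq_sub, pt2_sub_pt2, sub_zero, zero_sub]

theorem sinAlpha_mul_norm_mul_norm (a b ta tb : ℝ) :
    sinAlpha a b ta tb * (‖pt2 a (-b)‖ * ‖pt2 ta (tb - b)‖) = |a * (tb - b) + b * ta| := by
  rw [sinAlpha_eq_sin_angle, EuclideanSpace.sin_angle_mul_norm_mul_norm_eq_abs_cross]
  simp only [pt2_apply_zero, pt2_apply_one]
  congr 1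
  ring

theorem cross_pos_of_one_lt_div_add_div {a b ta tb : ℝ} (ha : 0 < a) (hb : 0 < b)
    (hconv : 1 < ta / a + tb / b) : 0 < a * (tb - b) + b * ta := by
  rw [div_add_div _ _ ha.ne' hb.ne', one_lt_div (by positivity)] at hconv
  linarith

theorem sinAlpha_mul_le {a b ta tb : ℝ} (ha : 0 ≤ a) (hta : 0 < ta)
    (hcross : 0 ≤ a * (tb - b) + b * ta) (htb : tb ≤ b) : sinAlpha a b ta tb * a ≤ b := by
  have hsin : 0 ≤ sinAlpha a b ta tb := Real.sin_nonneg_of_nonneg_of_le_pi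
    (EuclideanGeometry.angle_nonneg _ _ _) (EuclideanGeometry.angle_le_pi _ _ _)
  have hnorms : a * ta ≤ ‖pt2 a (-b)‖ * ‖pt2 ta (tb - b)‖ :=
    mul_le_mul ((le_abs_self a).trans (abs_le_norm_pt2 _ _))
      ((le_abs_self ta).trans (abs_le_norm_pt2 _ _)) hta.le (norm_nonneg _)
  have hmul : sinAlpha a b ta tb * a * ta ≤ b * ta := calc
    sinAlpha a b ta tb * a * ta ≤ sinAlpha a b ta tb * (‖pt2 a (-b)‖ * ‖pt2 ta (tb - b)‖) := by
      rw [mul_assoc]; gcongr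
    _ = a * (tb - b) + b * ta := by rw [sinAlpha_mul_norm_mul_norm, abs_of_nonneg hcross]
    _ ≤ b * ta := by linarith [mul_nonpos_of_nonneg_of_nonpos ha (sub_nonpos.mpr htb)]
  exact le_of_mul_le_mul_right hmul hta

/-- For convex elements `K(a,b,ta,tb)` under conditions (D1) and (D2) with constant `C`,
one has `a ≤ C' * b` for a constant `C'` depending only on `C`. -/
theorem short_side_above (C : ℝ) (hC : 0 < C) :
    ∃ C' : ℝ, 0 < C' ∧
      ∀ a b ta tb : ℝ, 0 < a → 0 < b → 0 < ta → 0 < tb →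
        1 < ta / a + tb / b →
        ta ≤ a → tb ≤ b →
        1 / C ≤ sinAlpha a b ta tb →
        a ≤ C' * b := by
  refine ⟨C, hC, fun a b ta tb ha hb hta _ hconv _ htb hsin => ?_⟩
  have hcross := cross_pos_of_one_lt_div_add_div ha hb hconv
  calc a = C * (1 / C * a) := by field_simp
    _ ≤ C * (sinAlpha a b ta tb * a) := by gcongr
    _ ≤ C * b := by gcongr; exact sinAlpha_mul_le ha.le hta hcross.le htb
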